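/- arXiv:1601.04133 — 9 statements merged into one kernel-verified Lean document; each statement's English description precedes it below -/
import Mathlib

section
/- Let A ∈ UU_n(F_q) have all super-diagonal entries non-zero. Then the centralizer of A in UU_n(F_q) has cardinality q^{n−1}. In particular, if B ∈ UU_n(F_q) commutes with A, the first-row entries b_{12},...,b_{1n} of B determine all remaining entries of B. -/
def IsUU {n : ℕ} {K : Type*} [Field K] (A : Matrix (Fin n) (Fin n) K) : Prop :=
  (∀ i, A i i = 1) ∧ ∀ i j : Fin n, j < i → A i j = 0

/-! Put `N = A - 1`, strictly upper triangular with non-zero super-diagonal. Row `0` of `N ^ i`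
vanishes before column `i` and is non-zero at column `i`, so the first rows of
`1, N, …, N ^ (n - 1)` form an invertible triangular matrix `M`. If `D` commutes with `N` and
has zero first row, then row `i` of `M * D` is row `0` of `N ^ i * D = D * N ^ i`, which is zero;
hence `D = 0`. So the centralizer of `N` consists of the combinations `∑ cᵢ • N ^ i`, each
determined by its first row `c ᵥ* M`, and the unipotent ones are exactly those with `c₀ = 1`,
leaving `n - 1` free coefficients. -/

namespace Matrix

section Powers

variable {R : Type*} [Semiring R] {n : ℕ} {N : Matrix (Fin n) (Fin n) R}

theorem pow_apply_eq_zero_of_lt_add (hN : ∀ i j, j ≤ i → N i j = 0) (m : ℕ) {i j : Fin n}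
    (h : (j : ℕ) < i + m) : (N ^ m) i j = 0 := by
  induction m generalizing j with
  | zero => exact one_apply_ne' (by omega)
  | succ m ih =>
    rw [pow_succ, mul_apply]
    refine Finset.sum_eq_zero fun k _ => ?_
    rcases le_or_gt j k with hjk | hkj
    · rw [hN k j hjk, mul_zero]
    · rw [ih (by omega), zero_mul]

theorem pow_apply_ne_zero_of_eq_add [NoZeroDivisors R] [Nontrivial R]
    (hN : ∀ i j, j ≤ i → N i j = 0) (hsup : ∀ i j : Fin n, (j : ℕ) = i + 1 → N i j ≠ 0)
    (m : ℕ) {i j : Fin n} (h : (j : ℕ) = i + m) : (N ^ m) i j ≠ 0 := by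
  induction m generalizing j with
  | zero => simp [show j = i by omega, one_apply_eq]
  | succ m ih =>
    let k : Fin n := ⟨i + m, by omega⟩
    have hsingle : (N ^ (m + 1)) i j = (N ^ m) i k * N k j := by
      rw [pow_succ, mul_apply]
      refine Finset.sum_eq_single k (fun l _ hlk => ?_) (by simp)
      rcases lt_or_gt_of_ne (Fin.val_ne_of_ne hlk) with hl | hl
      all_goals simp only [k] at hl
      · rw [pow_apply_eq_zero_of_lt_add hN m hl, zero_mul]
      · rw [hN l j (by omega), mul_zero]
    rw [hsingle]
    exact mul_ne_zero (ih rfl) (hsup k j (by simp [k]; omega))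

end Powers

section Centralizer

variable {K : Type*} [Field K] {n : ℕ} {N : Matrix (Fin (n + 1)) (Fin (n + 1)) K}

def firstRowsOfPowers (N : Matrix (Fin (n + 1)) (Fin (n + 1)) K) :
    Matrix (Fin (n + 1)) (Fin (n + 1)) K :=
  of fun i j => (N ^ (i : ℕ)) 0 j

def powerCombination (N : Matrix (Fin (n + 1)) (Fin (n + 1)) K) (c : Fin (n + 1) → K) :
    Matrix (Fin (n + 1)) (Fin (n + 1)) K :=
  ∑ i, c i • N ^ (i : ℕ)

theorem powerCombination_row_zero (c : Fin (n + 1) → K) :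
    powerCombination N c 0 = c ᵥ* firstRowsOfPowers N := by
  ext j
  simp [powerCombination, firstRowsOfPowers, vecMul, dotProduct, sum_apply]

theorem commute_powerCombination (c : Fin (n + 1) → K) : Commute N (powerCombination N c) :=
  Commute.sum_right _ _ _ fun _ _ => ((Commute.refl N).pow_right _).smul_right _

variable (hN : ∀ i j, j ≤ i → N i j = 0)
  (hsup : ∀ i j : Fin (n + 1), (j : ℕ) = i + 1 → N i j ≠ 0)
include hN

theorem powerCombination_apply_of_lt (c : Fin (n + 1) → K) {i j : Fin (n + 1)} (h : j < i) :
    powerCombination N c i j = 0 := by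
  simp only [powerCombination, sum_apply, smul_apply, smul_eq_mul]
  exact Finset.sum_eq_zero fun k _ => by rw [pow_apply_eq_zero_of_lt_add hN _ (by omega), mul_zero]

theorem powerCombination_apply_self (c : Fin (n + 1) → K) (i : Fin (n + 1)) :
    powerCombination N c i i = c 0 := by
  simp only [powerCombination, sum_apply, smul_apply, smul_eq_mul]
  rw [Finset.sum_eq_single 0 (fun k _ hk => ?_) (by simp)]
  · simp
  · rw [Fin.ne_iff_vne, Fin.val_zero] at hk
    rw [pow_apply_eq_zero_of_lt_add hN _ (by omega), mul_zero]

include hsup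

theorem det_firstRowsOfPowers_ne_zero : (firstRowsOfPowers N).det ≠ 0 := by
  have htri : (firstRowsOfPowers N).IsUpperTriangular := fun i j h =>
    pow_apply_eq_zero_of_lt_add hN _ (by simpa using h)
  rw [det_of_isUpperTriangular htri]
  exact Finset.prod_ne_zero_iff.mpr fun i _ => pow_apply_ne_zero_of_eq_add hN hsup _ (by simp)

theorem eq_zero_of_commute_of_row_zero {D : Matrix (Fin (n + 1)) (Fin (n + 1)) K}
    (hD : Commute N D) (hrow : D 0 = 0) : D = 0 := by
  have hMD : firstRowsOfPowers N * D = 0 := by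
    funext i
    calc (firstRowsOfPowers N * D) i = (N ^ (i : ℕ) * D) 0 := rfl
      _ = (D * N ^ (i : ℕ)) 0 := by rw [(hD.pow_left _).eq]
      _ = 0 := by rw [mul_apply_eq_vecMul, hrow, zero_vecMul]
  have hunit : IsUnit (firstRowsOfPowers N).det := (det_firstRowsOfPowers_ne_zero hN hsup).isUnit
  rw [← one_mul D, ← nonsing_inv_mul _ hunit, mul_assoc, hMD, mul_zero]

theorem eq_of_commute_of_row_zero_eq {B C : Matrix (Fin (n + 1)) (Fin (n + 1)) K}
    (hB : Commute N B) (hC : Commute N C) (hrow : B 0 = C 0) : B = C :=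
  sub_eq_zero.mp <| eq_zero_of_commute_of_row_zero hN hsup (hB.sub_right hC) (by
    funext j; rw [Matrix.sub_apply, hrow, sub_self]; rfl)

theorem powerCombination_injective : Function.Injective (powerCombination N) := by
  have hunit : IsUnit (firstRowsOfPowers N) :=
    (isUnit_iff_isUnit_det _).mpr (det_firstRowsOfPowers_ne_zero hN hsup).isUnit
  intro c d h
  apply vecMul_injective_iff_isUnit.mpr hunit
  simpa only [powerCombination_row_zero] using congrFun h 0

theorem eq_powerCombination_of_commute {B : Matrix (Fin (n + 1)) (Fin (n + 1)) K}
    (hB : Commute N B) : B = powerCombination N (B 0 ᵥ* (firstRowsOfPowers N)⁻¹) := by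
  have hunit : IsUnit (firstRowsOfPowers N).det := (det_firstRowsOfPowers_ne_zero hN hsup).isUnit
  refine eq_of_commute_of_row_zero_eq hN hsup hB (commute_powerCombination _) ?_
  rw [powerCombination_row_zero, vecMul_vecMul, nonsing_inv_mul _ hunit, vecMul_one]

theorem setOf_isUU_commute_eq_range :
    {B | IsUU B ∧ Commute B N} = Set.range (powerCombination N ∘ Fin.cons 1) := by
  ext B
  constructor
  · rintro ⟨hUU, hB⟩
    set c := B 0 ᵥ* (firstRowsOfPowers N)⁻¹
    have hBc : B = powerCombination N c := eq_powerCombination_of_commute hN hsup hB.symm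
    have hc : c 0 = 1 := by rw [← powerCombination_apply_self hN c 0, ← hBc, hUU.1]
    refine ⟨Fin.tail c, ?_⟩
    rw [Function.comp_apply, hBc, ← hc, Fin.cons_self_tail]
  · rintro ⟨t, rfl⟩
    refine ⟨⟨fun i => ?_, fun i j h => powerCombination_apply_of_lt hN _ h⟩,
      (commute_powerCombination _).symm⟩
    rw [Function.comp_apply, powerCombination_apply_self hN, Fin.cons_zero]

theorem ncard_setOf_isUU_commute [Fintype K] :
    {B | IsUU B ∧ Commute B N}.ncard = Fintype.card K ^ n := by
  rw [setOf_isUU_commute_eq_range hN hsup, Set.ncard_range_of_injective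
    ((powerCombination_injective hN hsup).comp (Fin.cons_right_injective _))]
  simp

end Centralizer

end Matrix

theorem stmt7 {n : ℕ} (hn : 0 < n) {F : Type*} [Field F] [Fintype F]
    (A : Matrix (Fin n) (Fin n) F) (hA : IsUU A)
    (hsd : ∀ i : Fin n, ∀ h : (i : ℕ) + 1 < n, A i ⟨(i : ℕ) + 1, h⟩ ≠ 0) :
    {B : Matrix (Fin n) (Fin n) F | IsUU B ∧ B * A = A * B}.ncard =
      Fintype.card F ^ (n - 1) ∧
    ∀ B C : Matrix (Fin n) (Fin n) F, IsUU B → IsUU C →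
      B * A = A * B → C * A = A * C →
      (∀ j : Fin n, B ⟨0, hn⟩ j = C ⟨0, hn⟩ j) → B = C := by
  obtain ⟨m, rfl⟩ : ∃ m, n = m + 1 := ⟨n - 1, by omega⟩
  have hN : ∀ i j, j ≤ i → (A - 1) i j = 0 := by
    intro i j h
    rcases h.lt_or_eq with h | rfl
    · simp [hA.2 i j h, Matrix.one_apply_ne' h.ne]
    · simp [hA.1]
  have hsup : ∀ i j : Fin (m + 1), (j : ℕ) = i + 1 → (A - 1) i j ≠ 0 := by
    intro i j h
    have hj : j = ⟨i + 1, by omega⟩ := Fin.ext h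
    rw [Matrix.sub_apply, Matrix.one_apply_ne' (by omega), sub_zero, hj]
    exact hsd i _
  have hcomm : ∀ B, B * A = A * B ↔ Commute B (A - 1) := fun B =>
    ⟨fun h => Commute.sub_right h (Commute.one_right B), fun h => by
      simpa only [sub_add_cancel] using (h.add_right (Commute.one_right B)).eq⟩
  refine ⟨?_, fun B C _ _ hB hC hrow => Matrix.eq_of_commute_of_row_zero_eq hN hsup
    ((hcomm B).1 hB).symm ((hcomm C).1 hC).symm (funext hrow)⟩
  simp_rw [hcomm]
  exact Matrix.ncard_setOf_isUU_commute hN hsup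
end

section
/- Let S_0 = {A ∈ UU_n(F_q) : all super-diagonal entries of A are non-zero}. Then the maximum size of a pairwise non-commuting subset of S_0 is (q−1)^{n−2} · q^{C(n−2,2)}, where C(n−2,2) is the binomial coefficient (n−2 choose 2). -/
/-- `omegaM X` is the maximum cardinality of a pairwise non-commuting subset of `X`
(inside a monoid). -/
noncomputable def omegaM {M : Type*} [Monoid M] (X : Set M) : ℕ :=
  sSup {k : ℕ | ∃ N : Finset M, ↑N ⊆ X ∧
    (∀ x ∈ N, ∀ y ∈ N, x ≠ y → x * y ≠ y * x) ∧ N.card = k}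

/-
Write a regular unipotent matrix as `A = 1 + N`, with `N` strictly upper triangular and
non-zero on the superdiagonal. The first rows of `1, N, …, N ^ (n - 1)` form a triangular
basis, so a matrix commuting with `N` is determined by its first row and is a polynomial in
`N`. Hence commuting is an equivalence relation on `S₀`, and each class contains exactly one
matrix with first row `(1, 1, 0, …, 0)`: a largest non-commuting subset of `S₀` picks one
element per class. The matrices with that first row are counted entry by entry: `n - 2` free
non-zero superdiagonal entries and `(n - 2).choose 2` free entries above the superdiagonal.
-/

open Matrix Finset

namespace RegularUnipotent

section Powers

variable {R : Type*} {n : ℕ}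

structure IsRegularStrictUpper [Zero R] (N : Matrix (Fin n) (Fin n) R) : Prop where
  apply_eq_zero : ∀ i j : Fin n, (j : ℕ) ≤ i → N i j = 0
  apply_ne_zero : ∀ i j : Fin n, (j : ℕ) = i + 1 → N i j ≠ 0

theorem pow_apply_eq_zero_of_lt_add [Semiring R] {N : Matrix (Fin n) (Fin n) R}
    (hN : ∀ i j : Fin n, (j : ℕ) ≤ i → N i j = 0) (k : ℕ) {i j : Fin n} (h : (j : ℕ) < i + k) :
    (N ^ k) i j = 0 := by
  induction k generalizing i with
  | zero => exact one_apply_ne fun hij => by subst hij; omega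
  | succ k ih =>
    rw [pow_succ', mul_apply]
    refine sum_eq_zero fun l _ => ?_
    by_cases hl : (l : ℕ) ≤ i
    · rw [hN i l hl, zero_mul]
    · rw [ih (by omega), mul_zero]

theorem IsRegularStrictUpper.pow_apply_ne_zero [Semiring R] [NoZeroDivisors R] [Nontrivial R]
    {N : Matrix (Fin n) (Fin n) R} (hN : IsRegularStrictUpper N) (k : ℕ) {i j : Fin n}
    (h : (j : ℕ) = i + k) : (N ^ k) i j ≠ 0 := by
  induction k generalizing i with
  | zero => rw [Fin.ext h, pow_zero, one_apply_eq]; exact one_ne_zero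
  | succ k ih =>
    have hi : (i : ℕ) + 1 < n := by omega
    rw [pow_succ', mul_apply, sum_eq_single ⟨i + 1, hi⟩]
    · exact mul_ne_zero (hN.apply_ne_zero _ _ rfl) (ih (by simp only; omega))
    · intro l _ hl
      by_cases hli : (l : ℕ) ≤ i
      · rw [hN.apply_eq_zero i l hli, zero_mul]
      · have : (l : ℕ) ≠ i + 1 := fun e => hl (Fin.ext e)
        rw [pow_apply_eq_zero_of_lt_add hN.apply_eq_zero k (by omega), mul_zero]
    · simp

end Powers

section Centralizer

variable {R : Type*} {n : ℕ}

def polyEval [Semiring R] (N : Matrix (Fin n) (Fin n) R) (c : Fin n → R) :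
    Matrix (Fin n) (Fin n) R :=
  ∑ k, c k • N ^ (k : ℕ)

def krylov [Semiring R] (N : Matrix (Fin n) (Fin n) R) (r : Fin n) : Matrix (Fin n) (Fin n) R :=
  of fun j k => (N ^ (k : ℕ)) r j

section CommSemiring

variable [CommSemiring R]

theorem polyEval_apply (N : Matrix (Fin n) (Fin n) R) (c : Fin n → R) (i j : Fin n) :
    polyEval N c i j = ∑ k, c k * (N ^ (k : ℕ)) i j := by
  simp [polyEval, Matrix.sum_apply]

theorem polyEval_row (N : Matrix (Fin n) (Fin n) R) (c : Fin n → R) (r : Fin n) :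
    polyEval N c r = krylov N r *ᵥ c := by
  ext j
  simp [polyEval_apply, krylov, mulVec, dotProduct, mul_comm]

theorem commute_polyEval_pow (N : Matrix (Fin n) (Fin n) R) (c : Fin n → R) (k : ℕ) :
    Commute (polyEval N c) (N ^ k) :=
  Commute.sum_left _ _ _ fun l _ => (Commute.pow_pow_self N l k).smul_left _

theorem commute_polyEval_polyEval (N : Matrix (Fin n) (Fin n) R) (c d : Fin n → R) :
    Commute (polyEval N c) (polyEval N d) :=
  Commute.sum_right _ _ _ fun l _ => (commute_polyEval_pow N c l).smul_right _

end CommSemiring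

section CommRing

variable [CommRing R] {N : Matrix (Fin n) (Fin n) R} {r : Fin n}

theorem eq_polyEval_of_commute (hK : IsUnit (krylov N r).det) {B : Matrix (Fin n) (Fin n) R}
    (hB : Commute B N) : B = polyEval N ((krylov N r)⁻¹ *ᵥ B r) := by
  set D := B - polyEval N ((krylov N r)⁻¹ *ᵥ B r)
  have hDr : D r = 0 := by
    ext j
    simp [D, polyEval_row, mulVec_mulVec, mul_nonsing_inv _ hK]
  have hKD : (krylov N r)ᵀ * D = 0 := by
    ext k j
    have hcomm : Commute D (N ^ (k : ℕ)) := (hB.pow_right k).sub_left (commute_polyEval_pow ..)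
    calc ((krylov N r)ᵀ * D) k j = (N ^ (k : ℕ) * D) r j := by simp [mul_apply, krylov]
      _ = (D * N ^ (k : ℕ)) r j := by rw [hcomm.eq]
      _ = 0 := by simp [mul_apply, hDr]
  have hKT : IsUnit (krylov N r)ᵀ := by rwa [isUnit_iff_isUnit_det, det_transpose]
  exact sub_eq_zero.mp (hKT.mul_right_eq_zero.mp hKD)

theorem eq_of_commute_of_row_eq (hK : IsUnit (krylov N r).det) {B C : Matrix (Fin n) (Fin n) R}
    (hB : Commute B N) (hC : Commute C N) (h : B r = C r) : B = C := by
  rw [eq_polyEval_of_commute hK hB, eq_polyEval_of_commute hK hC, h]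

theorem commute_of_commute_of_commute (hK : IsUnit (krylov N r).det)
    {X Y : Matrix (Fin n) (Fin n) R} (hX : Commute X N) (hY : Commute Y N) : Commute X Y := by
  rw [eq_polyEval_of_commute hK hX, eq_polyEval_of_commute hK hY]
  exact commute_polyEval_polyEval ..

end CommRing

theorem IsRegularStrictUpper.isUnit_det_krylov [Field R] [NeZero n]
    {N : Matrix (Fin n) (Fin n) R} (hN : IsRegularStrictUpper N) : IsUnit (krylov N 0).det := by
  have hlow : (krylov N 0).IsLowerTriangular := fun j k hjk =>
    pow_apply_eq_zero_of_lt_add hN.apply_eq_zero _ (by simpa using hjk)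
  rw [det_of_isLowerTriangular _ hlow]
  exact isUnit_iff_ne_zero.mpr (prod_ne_zero_iff.mpr fun k _ => hN.pow_apply_ne_zero _ (by simp))

end Centralizer

theorem commute_sub_one_iff {R : Type*} [Ring R] {a b : R} : Commute a (b - 1) ↔ Commute a b :=
  ⟨fun h => by simpa using h.add_right (Commute.one_right a),
    fun h => h.sub_right (Commute.one_right a)⟩

section RegularUU

variable {F : Type*} [Field F]

def IsRegularUU {n : ℕ} (A : Matrix (Fin n) (Fin n) F) : Prop :=
  IsUU A ∧ ∀ i : Fin n, ∀ h : (i : ℕ) + 1 < n, A i ⟨(i : ℕ) + 1, h⟩ ≠ 0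

theorem IsRegularUU.sub_one {n : ℕ} {A : Matrix (Fin n) (Fin n) F} (hA : IsRegularUU A) :
    IsRegularStrictUpper (A - 1) where
  apply_eq_zero i j h := by
    rcases h.lt_or_eq with h | h
    · rw [Matrix.sub_apply, hA.1.2 i j h, one_apply_ne (by rintro rfl; omega), sub_zero]
    · rw [Fin.ext h, Matrix.sub_apply, hA.1.1, one_apply_eq, sub_self]
  apply_ne_zero i j h := by
    have hi : (i : ℕ) + 1 < n := h ▸ j.isLt
    obtain rfl : j = ⟨i + 1, hi⟩ := Fin.ext h
    rw [Matrix.sub_apply, one_apply_ne (by simp [Fin.ext_iff]), sub_zero]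
    exact hA.2 i _

theorem IsRegularUU.commute_of_commute {n : ℕ} [NeZero n] {A X Y : Matrix (Fin n) (Fin n) F}
    (hA : IsRegularUU A) (hX : Commute X A) (hY : Commute Y A) : Commute X Y :=
  commute_of_commute_of_commute hA.sub_one.isUnit_det_krylov (commute_sub_one_iff.mpr hX)
    (commute_sub_one_iff.mpr hY)

theorem polyEval_apply_of_lt {n : ℕ} {N : Matrix (Fin n) (Fin n) F}
    (hN : IsRegularStrictUpper N) (c : Fin n → F) {i j : Fin n} (h : (j : ℕ) < i) :
    polyEval N c i j = 0 :=
  (polyEval_apply N c i j).trans <| sum_eq_zero fun _ _ => by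
    rw [pow_apply_eq_zero_of_lt_add hN.apply_eq_zero _ (by omega), mul_zero]

variable {m : ℕ} {N : Matrix (Fin (m + 2)) (Fin (m + 2)) F}

theorem polyEval_apply_self (hN : IsRegularStrictUpper N) (c : Fin (m + 2) → F)
    (i : Fin (m + 2)) : polyEval N c i i = c 0 := by
  rw [polyEval_apply, sum_eq_single 0 (fun k _ hk => ?_) (by simp)]
  · simp
  · have : (k : ℕ) ≠ 0 := fun h => hk (Fin.ext h)
    rw [pow_apply_eq_zero_of_lt_add hN.apply_eq_zero _ (by omega), mul_zero]

theorem polyEval_apply_of_eq_add_one (hN : IsRegularStrictUpper N) (c : Fin (m + 2) → F)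
    {i j : Fin (m + 2)} (h : (j : ℕ) = i + 1) : polyEval N c i j = c 1 * N i j := by
  rw [polyEval_apply, sum_eq_single 1 (fun k _ hk => ?_) (by simp)]
  · simp
  · have : (k : ℕ) ≠ 1 := fun h => hk (Fin.ext h)
    rcases Nat.eq_zero_or_pos k with hk0 | hk0
    · rw [hk0, pow_zero, one_apply_ne (by rintro rfl; omega), mul_zero]
    · rw [pow_apply_eq_zero_of_lt_add hN.apply_eq_zero _ (by omega), mul_zero]

theorem IsRegularStrictUpper.isRegularUU_polyEval (hN : IsRegularStrictUpper N)
    {c : Fin (m + 2) → F} (h0 : c 0 = 1) (h1 : c 1 ≠ 0) : IsRegularUU (polyEval N c) :=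
  ⟨⟨fun i => by rw [polyEval_apply_self hN, h0], fun i j h => polyEval_apply_of_lt hN c h⟩,
    fun i h => by
      rw [polyEval_apply_of_eq_add_one hN c rfl]
      exact mul_ne_zero h1 (hN.apply_ne_zero _ _ rfl)⟩

end RegularUU

section NormalForm

variable {F : Type*} [Field F] {m : ℕ}

def normalRow : Fin (m + 2) → F := fun j => if (j : ℕ) ≤ 1 then 1 else 0

def IsNormalForm (A : Matrix (Fin (m + 2)) (Fin (m + 2)) F) : Prop :=
  IsRegularUU A ∧ A 0 = normalRow

theorem IsNormalForm.eq_of_commute {A B : Matrix (Fin (m + 2)) (Fin (m + 2)) F}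
    (hA : IsNormalForm A) (hB : IsNormalForm B) (h : Commute B A) : B = A :=
  eq_of_commute_of_row_eq hA.1.sub_one.isUnit_det_krylov (commute_sub_one_iff.mpr h)
    (commute_sub_one_iff.mpr (Commute.refl A)) (hB.2.trans hA.2.symm)

theorem IsRegularUU.exists_isNormalForm_commute {A : Matrix (Fin (m + 2)) (Fin (m + 2)) F}
    (hA : IsRegularUU A) : ∃ B, IsNormalForm B ∧ Commute B A := by
  have hN := hA.sub_one
  set c := (krylov (A - 1) 0)⁻¹ *ᵥ normalRow
  have hrow : polyEval (A - 1) c 0 = normalRow := by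
    rw [polyEval_row, mulVec_mulVec, mul_nonsing_inv _ hN.isUnit_det_krylov, one_mulVec]
  have hc0 : c 0 = 1 := by
    rw [← polyEval_apply_self hN c 0, hrow]
    simp [normalRow]
  have hc1 : c 1 ≠ 0 := by
    refine left_ne_zero_of_mul_eq_one (b := (A - 1) 0 1) ?_
    rw [← polyEval_apply_of_eq_add_one hN c (by simp), hrow]
    simp [normalRow]
  exact ⟨polyEval (A - 1) c, ⟨hN.isRegularUU_polyEval hc0 hc1, hrow⟩,
    commute_sub_one_iff.mp (by simpa using commute_polyEval_pow (A - 1) c 1)⟩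

end NormalForm

section Counting

theorem card_superdiagonal_below_first_row (m : ℕ) :
    #{x : Fin (m + 2) × Fin (m + 2) | (x.1 : ℕ) ≠ 0 ∧ (x.2 : ℕ) = x.1 + 1} = m := by
  refine .trans (card_bij' (t := (univ : Finset (Fin m))) (fun x hx => ⟨x.1 - 1, ?_⟩)
    (fun a _ => (⟨a + 1, by omega⟩, ⟨a + 2, by omega⟩)) ?_ ?_ ?_ ?_) (card_fin m)
  · simp only [mem_filter] at hx; omega
  all_goals
    intro x hx
    simp only [mem_filter, mem_univ, true_and, and_true, Prod.ext_iff, Fin.ext_iff] at hx ⊢ <;>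
    omega

theorem card_above_superdiagonal_below_first_row (m : ℕ) :
    #{x : Fin (m + 2) × Fin (m + 2) | (x.1 : ℕ) ≠ 0 ∧ (x.1 : ℕ) + 1 < x.2} = m.choose 2 := by
  refine .trans (card_bij' (t := {a : Fin m × Fin m | a.1 < a.2})
    (fun x hx => (⟨x.1 - 1, ?_⟩, ⟨x.2 - 2, ?_⟩))
    (fun a _ => (⟨a.1 + 1, by omega⟩, ⟨a.2 + 2, by omega⟩)) ?_ ?_ ?_ ?_)
    (by simpa using Fintype.card_product_filter_lt (α := Fin m))
  · simp only [mem_filter] at hx; omega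
  · simp only [mem_filter] at hx; omega
  all_goals
    intro x hx
    simp only [mem_filter, mem_univ, true_and, Prod.ext_iff, Fin.ext_iff, Fin.lt_def] at hx ⊢
    omega

variable {F : Type*} [Field F] [Fintype F] [DecidableEq F] {m : ℕ}

def allowedEntries (i j : Fin (m + 2)) : Finset F :=
  if (i : ℕ) ≠ 0 ∧ (j : ℕ) = i + 1 then univ.erase 0
  else if (i : ℕ) ≠ 0 ∧ (i : ℕ) + 1 < j then univ
  else {if (i : ℕ) = 0 then normalRow j else (1 : Matrix (Fin (m + 2)) (Fin (m + 2)) F) i j}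

def normalForms : Finset (Matrix (Fin (m + 2)) (Fin (m + 2)) F) :=
  Fintype.piFinset fun i => Fintype.piFinset (allowedEntries i)

theorem mem_normalForms {A : Matrix (Fin (m + 2)) (Fin (m + 2)) F} :
    A ∈ normalForms ↔ IsNormalForm A := by
  have hmem : A ∈ normalForms ↔ ∀ i j, A i j ∈ allowedEntries i j :=
    Fintype.mem_piFinset.trans (forall_congr' fun _ => Fintype.mem_piFinset)
  simp only [hmem, allowedEntries]
  constructor
  · intro h
    refine ⟨⟨⟨fun i => ?_, fun i j hij => ?_⟩, fun i hi => ?_⟩, funext fun j => ?_⟩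
    · have := h i i
      split_ifs at this <;> first | omega | simp_all [normalRow]
    · have := h i j
      split_ifs at this <;> first | omega | simp_all [one_apply_ne, Fin.ne_of_gt hij]
    · have := h i ⟨i + 1, hi⟩
      split_ifs at this <;> first | omega | simp_all [normalRow]
    · have := h 0 j
      split_ifs at this <;> first | omega | simp_all
  · rintro ⟨⟨⟨hdiag, hlow⟩, hsup⟩, hrow⟩ i j
    split_ifs with hP hQ h0
    · have hi : (i : ℕ) + 1 < m + 2 := hP.2 ▸ j.isLt
      obtain rfl : j = ⟨i + 1, hi⟩ := Fin.ext hP.2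
      simpa using hsup i hi
    · exact mem_univ _
    · obtain rfl : i = 0 := Fin.ext h0
      exact mem_singleton.mpr (congrFun hrow j)
    · rcases lt_trichotomy (j : ℕ) i with hji | hji | hji
      · rw [mem_singleton, hlow i j hji, one_apply_ne (Fin.ne_of_gt hji)]
      · rw [mem_singleton, Fin.ext hji, hdiag, one_apply_eq]
      · omega

theorem card_allowedEntries (i j : Fin (m + 2)) :
    #(allowedEntries (F := F) i j) =
      (Fintype.card F - 1) ^ (if (i : ℕ) ≠ 0 ∧ (j : ℕ) = i + 1 then 1 else 0) *
        Fintype.card F ^ (if (i : ℕ) ≠ 0 ∧ (i : ℕ) + 1 < j then 1 else 0) := by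
  unfold allowedEntries
  split_ifs <;> first | omega | simp [card_erase_of_mem]

theorem card_normalForms :
    #(normalForms : Finset (Matrix (Fin (m + 2)) (Fin (m + 2)) F)) =
      (Fintype.card F - 1) ^ m * Fintype.card F ^ m.choose 2 := by
  have hprod : #(normalForms : Finset (Matrix (Fin (m + 2)) (Fin (m + 2)) F)) =
      ∏ i, ∏ j, #(allowedEntries (F := F) i j) :=
    (Fintype.card_piFinset _).trans (prod_congr rfl fun i _ => Fintype.card_piFinset _)
  simp only [hprod, card_allowedEntries, prod_mul_distrib, prod_pow_eq_pow_sum]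
  rw [← Fintype.sum_prod_type', ← Fintype.sum_prod_type', sum_boole, sum_boole,
    card_superdiagonal_below_first_row, card_above_superdiagonal_below_first_row, Nat.cast_id,
    Nat.cast_id]

end Counting

section NonCommuting

variable {M : Type*} [Monoid M] {X : Set M} {T : Finset M} {C : M → Set M}

theorem card_le_of_pairwise_not_commute (hC : ∀ t ∈ T, (C t).Pairwise Commute)
    (hXC : X ⊆ ⋃ t ∈ T, C t) {S : Finset M} (hSX : ↑S ⊆ X)
    (hS : (S : Set M).Pairwise fun x y => ¬Commute x y) : #S ≤ #T := by
  have hcover : ∀ x ∈ S, ∃ t ∈ T, x ∈ C t := fun x hx => by simpa using hXC (hSX hx)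
  choose! f hfT hfC using hcover
  refine card_le_card_of_injOn f hfT fun x hx y hy hxy => ?_
  by_contra hne
  exact hS hx hy hne (hC _ (hfT x hx) (hfC x hx) (hxy ▸ hfC y hy) hne)

theorem omegaM_eq_card (hTX : ↑T ⊆ X) (hT : (T : Set M).Pairwise fun x y => ¬Commute x y)
    (hC : ∀ t ∈ T, (C t).Pairwise Commute) (hXC : X ⊆ ⋃ t ∈ T, C t) : omegaM X = #T := by
  refine le_antisymm (csSup_le ⟨#T, T, hTX, fun _ hx _ hy => hT hx hy, rfl⟩ ?_)
    (le_csSup ⟨#T, ?_⟩ ⟨T, hTX, fun _ hx _ hy => hT hx hy, rfl⟩) <;>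
  · rintro _ ⟨S, hSX, hS, rfl⟩
    exact card_le_of_pairwise_not_commute hC hXC hSX fun _ hx _ hy => hS _ hx _ hy

theorem omegaM_singleton (x : M) : omegaM {x} = 1 := by
  simpa using omegaM_eq_card (T := {x}) (C := fun _ => {x}) (by simp) (by simp) (by simp)
    (by simp)

end NonCommuting

theorem regularUU_eq_singleton_one {F : Type*} [Field F] {n : ℕ} (hn : n ≤ 1) :
    {A : Matrix (Fin n) (Fin n) F | IsRegularUU A} = {1} := by
  have := Fin.subsingleton_iff_le_one.mpr hn
  ext A
  refine ⟨fun hA => ?_, ?_⟩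
  · ext i j
    rw [Subsingleton.elim i j, hA.1.1, one_apply_eq]
  · rintro rfl
    exact ⟨⟨fun i => one_apply_eq i, fun i j h => one_apply_ne h.ne'⟩, fun i h => by omega⟩

theorem omegaM_regularUU {F : Type*} [Field F] [Fintype F] (m : ℕ) :
    omegaM {A : Matrix (Fin (m + 2)) (Fin (m + 2)) F | IsRegularUU A} =
      (Fintype.card F - 1) ^ m * Fintype.card F ^ m.choose 2 := by
  classical
  rw [← card_normalForms]
  refine omegaM_eq_card (C := fun t => {x | Commute x t}) ?_ ?_ ?_ ?_
  · exact fun A hA => (mem_normalForms.mp hA).1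
  · exact fun A hA B hB hne hc =>
      hne ((mem_normalForms.mp hB).eq_of_commute (mem_normalForms.mp hA) hc)
  · exact fun t ht X hX Y hY _ => (mem_normalForms.mp ht).1.commute_of_commute hX hY
  intro A hA
  obtain ⟨B, hB, hBA⟩ := IsRegularUU.exists_isNormalForm_commute hA
  exact Set.mem_biUnion (mem_normalForms.mpr hB) hBA.symm

end RegularUnipotent

theorem stmt8 {n : ℕ} {F : Type*} [Field F] [Fintype F] :
    omegaM {A : Matrix (Fin n) (Fin n) F | IsUU A ∧
        ∀ i : Fin n, ∀ h : (i : ℕ) + 1 < n, A i ⟨(i : ℕ) + 1, h⟩ ≠ 0} =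
      (Fintype.card F - 1) ^ (n - 2) * Fintype.card F ^ Nat.choose (n - 2) 2 := by
  rcases Nat.lt_or_ge n 2 with hn | hn
  · change omegaM {A : Matrix (Fin n) (Fin n) F | RegularUnipotent.IsRegularUU A} = _
    rw [RegularUnipotent.regularUU_eq_singleton_one (by omega),
      RegularUnipotent.omegaM_singleton, Nat.sub_eq_zero_of_le hn.le]
    simp
  · obtain ⟨m, rfl⟩ := Nat.exists_eq_add_of_le' hn
    exact RegularUnipotent.omegaM_regularUU m
end

section
/- Let T_1 = {A ∈ UU_4(F_q) : a_{34} = 0}. Then T_1 is a subgroup of UU_4(F_q), its center Z(T_1) = {A ∈ T_1 : a_{12} = a_{23} = a_{34} = a_{24} = 0} has order q², the centralizer in T_1 of every noncentral element of T_1 is abelian (T_1 is an AC-group), and ω(T_1) = q² + 1. -/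
/-- `T₁ = {A ∈ UU₄(F_q) : a₃₄ = 0}` (0-indexed: entry `(2,3)` vanishes). -/
def T1 (F : Type*) [Field F] : Set (Matrix (Fin 4) (Fin 4) F) :=
  {A | IsUU A ∧ A 2 3 = 0}

/-- The claimed center of `T₁`: only entries `(1,3)` and `(1,4)` (0-indexed `(0,2)`,
`(0,3)`) are free. -/
def ZT1 (F : Type*) [Field F] : Set (Matrix (Fin 4) (Fin 4) F) :=
  {A | A ∈ T1 F ∧ A 0 1 = 0 ∧ A 1 2 = 0 ∧ A 1 3 = 0}

/-!
Writing an element of `T₁` as `mk a b c d e` with free entries `a₁₂, a₁₃, a₁₄, a₂₃, a₂₄`, the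
product is `mk (a+a') (b+ad'+b') (c+ae'+c') (d+d') (e+e')`, so two elements commute iff
`a d' = a' d` and `a e' = a' e`. Off the center this says exactly that their slopes agree, where
the slope is the point `(d/a, e/a)` of `F²`, or the point at infinity when `a = 0`. Hence
commuting is an equivalence relation on noncentral elements (the AC property) whose classes are
indexed by the `q² + 1` slopes: a pairwise noncommuting set has at most one element per slope,
and one noncentral element of each slope gives such a set.
-/

section omegaM

variable {M : Type*} [Monoid M] {X : Set M}

lemma card_le_of_pairwise_not_commute {β : Type*} [Fintype β] (σ : M → β)
    (hσ : ∀ x ∈ X, ∀ y ∈ X, σ x = σ y → x * y = y * x) {N : Finset M} (hNX : ↑N ⊆ X)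
    (hN : (N : Set M).Pairwise fun x y => x * y ≠ y * x) : N.card ≤ Fintype.card β :=
  Finset.card_le_card_of_injOn σ (fun _ _ => Finset.mem_coe.2 (Finset.mem_univ _))
    fun x hx y hy hxy => by_contra fun hne => hN hx hy hne (hσ x (hNX hx) y (hNX hy) hxy)

lemma omegaM_eq_card {β : Type*} [Fintype β] (σ : M → β)
    (hσ : ∀ x ∈ X, ∀ y ∈ X, σ x = σ y → x * y = y * x) (N : Finset M) (hNX : ↑N ⊆ X)
    (hN : (N : Set M).Pairwise fun x y => x * y ≠ y * x) (hcard : N.card = Fintype.card β) :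
    omegaM X = Fintype.card β :=
  IsGreatest.csSup_eq ⟨⟨N, hNX, hN, hcard⟩, by
    rintro _ ⟨N', hN'X, hN', rfl⟩
    exact card_le_of_pairwise_not_commute σ hσ hN'X hN'⟩

end omegaM

namespace T1

variable {F : Type*} [Field F]

def mk (a b c d e : F) : Matrix (Fin 4) (Fin 4) F :=
  !![1, a, b, c; 0, 1, d, e; 0, 0, 1, 0; 0, 0, 0, 1]

lemma mk_mul (a b c d e a' b' c' d' e' : F) :
    mk a b c d e * mk a' b' c' d' e' =
      mk (a + a') (b + a * d' + b') (c + a * e' + c') (d + d') (e + e') := by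
  ext i j
  fin_cases i <;> fin_cases j <;> simp [mk, Matrix.mul_apply, Fin.sum_univ_four] <;> ring

lemma mk_inj {a b c d e a' b' c' d' e' : F} :
    mk a b c d e = mk a' b' c' d' e' ↔ a = a' ∧ b = b' ∧ c = c' ∧ d = d' ∧ e = e' := by
  refine ⟨fun h => ⟨congrFun (congrFun h 0) 1, congrFun (congrFun h 0) 2,
    congrFun (congrFun h 0) 3, congrFun (congrFun h 1) 2, congrFun (congrFun h 1) 3⟩, ?_⟩
  rintro ⟨rfl, rfl, rfl, rfl, rfl⟩
  rfl

lemma mk_zero : mk (0 : F) 0 0 0 0 = 1 := by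
  ext i j
  fin_cases i <;> fin_cases j <;> simp [mk]

lemma mk_mem (a b c d e : F) : mk a b c d e ∈ T1 F := by
  refine ⟨⟨fun i => ?_, fun i j hji => ?_⟩, rfl⟩
  · fin_cases i <;> rfl
  · fin_cases i <;> fin_cases j <;> first | rfl | exact absurd hji (by decide)

lemma eq_mk {A : Matrix (Fin 4) (Fin 4) F} (hA : A ∈ T1 F) :
    A = mk (A 0 1) (A 0 2) (A 0 3) (A 1 2) (A 1 3) := by
  obtain ⟨⟨hdiag, hlower⟩, h23⟩ := hA
  ext i j
  fin_cases i <;> fin_cases j <;> simp [mk] <;>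
    first | exact hdiag _ | exact h23 | exact hlower _ _ (by decide)

lemma one_mem : (1 : Matrix (Fin 4) (Fin 4) F) ∈ T1 F :=
  mk_zero (F := F) ▸ mk_mem 0 0 0 0 0

lemma mul_mem {A B : Matrix (Fin 4) (Fin 4) F} (hA : A ∈ T1 F) (hB : B ∈ T1 F) :
    A * B ∈ T1 F := by
  rw [eq_mk hA, eq_mk hB, mk_mul]
  exact mk_mem _ _ _ _ _

lemma exists_inv {A : Matrix (Fin 4) (Fin 4) F} (hA : A ∈ T1 F) :
    ∃ B ∈ T1 F, A * B = 1 ∧ B * A = 1 := by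
  rw [eq_mk hA]
  set a := A 0 1; set b := A 0 2; set c := A 0 3; set d := A 1 2; set e := A 1 3
  refine ⟨mk (-a) (a * d - b) (a * e - c) (-d) (-e), mk_mem _ _ _ _ _, ?_, ?_⟩ <;>
    rw [mk_mul, ← mk_zero, mk_inj] <;> refine ⟨?_, ?_, ?_, ?_, ?_⟩ <;> ring

lemma mk_mul_comm_iff {a b c d e a' b' c' d' e' : F} :
    mk a b c d e * mk a' b' c' d' e' = mk a' b' c' d' e' * mk a b c d e ↔
      a * d' = a' * d ∧ a * e' = a' * e := by
  rw [mk_mul, mk_mul, mk_inj]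
  constructor
  · rintro ⟨-, hb, hc, -, -⟩
    exact ⟨by linear_combination hb, by linear_combination hc⟩
  · rintro ⟨hd, he⟩
    exact ⟨by ring, by linear_combination hd, by linear_combination he, by ring, by ring⟩

lemma mul_comm_iff {A B : Matrix (Fin 4) (Fin 4) F} (hA : A ∈ T1 F) (hB : B ∈ T1 F) :
    A * B = B * A ↔ A 0 1 * B 1 2 = B 0 1 * A 1 2 ∧ A 0 1 * B 1 3 = B 0 1 * A 1 3 := by
  have h := mk_mul_comm_iff (a := A 0 1) (b := A 0 2) (c := A 0 3) (d := A 1 2) (e := A 1 3)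
    (a' := B 0 1) (b' := B 0 2) (c' := B 0 3) (d' := B 1 2) (e' := B 1 3)
  rwa [← eq_mk hA, ← eq_mk hB] at h

lemma mul_comm_of_mem_ZT1 {A B : Matrix (Fin 4) (Fin 4) F} (hA : A ∈ ZT1 F) (hB : B ∈ T1 F) :
    A * B = B * A := by
  obtain ⟨hAT, ha, hd, he⟩ := hA
  rw [mul_comm_iff hAT hB, ha, hd, he]
  simp

theorem center_eq : {A ∈ T1 F | ∀ B ∈ T1 F, A * B = B * A} = ZT1 F := by
  ext A
  refine ⟨fun ⟨hA, hcomm⟩ => ?_, fun hA => ⟨hA.1, fun B hB => mul_comm_of_mem_ZT1 hA hB⟩⟩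
  have h₁ := hcomm _ (mk_mem 1 0 0 0 0)
  have h₂ := hcomm _ (mk_mem 0 0 0 1 0)
  rw [eq_mk hA, mk_mul_comm_iff] at h₁ h₂
  exact ⟨hA, by simpa using h₂.1, by simpa using h₁.1.symm, by simpa using h₁.2.symm⟩

lemma ZT1_eq_range : ZT1 F = Set.range fun p : F × F => mk 0 p.1 p.2 0 0 := by
  ext A
  constructor
  · rintro ⟨hA, ha, hd, he⟩
    refine ⟨(A 0 2, A 0 3), ?_⟩
    conv_rhs => rw [eq_mk hA, ha, hd, he]
  · rintro ⟨p, rfl⟩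
    exact ⟨mk_mem _ _ _ _ _, rfl, rfl, rfl⟩

theorem ncard_ZT1 [Fintype F] : (ZT1 F).ncard = Fintype.card F ^ 2 := by
  rw [ZT1_eq_range, Set.ncard_range_of_injective, Nat.card_eq_fintype_card, Fintype.card_prod, sq]
  intro p q h
  obtain ⟨-, h₁, h₂, -, -⟩ := mk_inj.1 h
  exact Prod.ext h₁ h₂

open Classical in
noncomputable def slope (A : Matrix (Fin 4) (Fin 4) F) : Option (F × F) :=
  if A 0 1 = 0 then none else some (A 1 2 / A 0 1, A 1 3 / A 0 1)

lemma mul_comm_of_slope_eq {A B : Matrix (Fin 4) (Fin 4) F} (hA : A ∈ T1 F) (hB : B ∈ T1 F)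
    (h : slope A = slope B) : A * B = B * A := by
  rw [mul_comm_iff hA hB]
  unfold slope at h
  split_ifs at h with ha hb hb
  · simp [ha, hb]
  · obtain ⟨hd, he⟩ := Prod.ext_iff.1 (Option.some_injective _ h)
    rw [div_eq_div_iff ha hb] at hd he
    exact ⟨by linear_combination -hd, by linear_combination -he⟩

lemma slope_eq_of_mul_comm {A B : Matrix (Fin 4) (Fin 4) F} (hA : A ∈ T1 F) (hB : B ∈ T1 F)
    (hAZ : A ∉ ZT1 F) (hBZ : B ∉ ZT1 F) (h : A * B = B * A) : slope A = slope B := by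
  obtain ⟨hd, he⟩ := (mul_comm_iff hA hB).1 h
  unfold slope
  split_ifs with ha hb hb
  · rfl
  · rw [ha, zero_mul, eq_comm, mul_eq_zero] at hd he
    exact absurd ⟨hA, ha, hd.resolve_left hb, he.resolve_left hb⟩ hAZ
  · rw [hb, zero_mul, mul_eq_zero] at hd he
    exact absurd ⟨hB, hb, hd.resolve_left ha, he.resolve_left ha⟩ hBZ
  · refine congrArg some (Prod.ext ?_ ?_) <;> rw [div_eq_div_iff ha hb]
    · linear_combination -hd
    · linear_combination -he

theorem mul_comm_of_mem_centralizer {A B C : Matrix (Fin 4) (Fin 4) F} (hA : A ∈ T1 F)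
    (hAZ : A ∉ ZT1 F) (hB : B ∈ T1 F) (hC : C ∈ T1 F) (hBA : B * A = A * B)
    (hCA : C * A = A * C) : B * C = C * B := by
  by_cases hBZ : B ∈ ZT1 F
  · exact mul_comm_of_mem_ZT1 hBZ hC
  by_cases hCZ : C ∈ ZT1 F
  · exact (mul_comm_of_mem_ZT1 hCZ hB).symm
  refine mul_comm_of_slope_eq hB hC ?_
  rw [slope_eq_of_mul_comm hB hA hBZ hAZ hBA, slope_eq_of_mul_comm hA hC hAZ hCZ hCA.symm]

def ofSlope : Option (F × F) → Matrix (Fin 4) (Fin 4) F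
  | none => mk 0 0 0 1 0
  | some p => mk 1 0 0 p.1 p.2

lemma ofSlope_mem (o : Option (F × F)) : ofSlope o ∈ T1 F := by
  cases o <;> exact mk_mem _ _ _ _ _

lemma slope_ofSlope (o : Option (F × F)) : slope (ofSlope o) = o := by
  cases o <;> simp [ofSlope, slope, mk]

lemma ofSlope_notMem_ZT1 (o : Option (F × F)) : ofSlope o ∉ ZT1 F := by
  cases o <;> simp [ofSlope, ZT1, mk]

theorem omegaM_eq [Fintype F] : omegaM (T1 F) = Fintype.card F ^ 2 + 1 := by
  classical
  have hinj : Function.Injective (ofSlope (F := F)) :=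
    Function.LeftInverse.injective slope_ofSlope
  have hcard : Fintype.card (Option (F × F)) = Fintype.card F ^ 2 + 1 := by simp [sq]
  rw [← hcard]
  refine omegaM_eq_card slope (fun A hA B hB => mul_comm_of_slope_eq hA hB)
    (Finset.univ.image ofSlope) ?_ ?_ ?_
  · simp only [Finset.coe_image, Finset.coe_univ, Set.image_univ]
    rintro _ ⟨o, rfl⟩
    exact ofSlope_mem o
  · simp only [Finset.coe_image, Finset.coe_univ, Set.image_univ]
    rintro _ ⟨o, rfl⟩ _ ⟨o', rfl⟩ hne h
    refine hne (congrArg ofSlope ?_)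
    simpa only [slope_ofSlope] using slope_eq_of_mul_comm (ofSlope_mem o) (ofSlope_mem o')
      (ofSlope_notMem_ZT1 o) (ofSlope_notMem_ZT1 o') h
  · rw [Finset.card_image_of_injective _ hinj, Finset.card_univ]

end T1

theorem stmt9 {F : Type*} [Field F] [Fintype F] :
    -- T₁ is a subgroup of UU₄(F_q)
    ((1 : Matrix (Fin 4) (Fin 4) F) ∈ T1 F) ∧
    (∀ A ∈ T1 F, ∀ B ∈ T1 F, A * B ∈ T1 F) ∧
    (∀ A ∈ T1 F, ∃ B ∈ T1 F, A * B = 1 ∧ B * A = 1) ∧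
    -- its center is ZT1, of cardinality q²
    ({A ∈ T1 F | ∀ B ∈ T1 F, A * B = B * A} = ZT1 F) ∧
    (ZT1 F).ncard = Fintype.card F ^ 2 ∧
    -- T₁ is an AC-group: the centralizer in T₁ of any noncentral element is abelian
    (∀ A ∈ T1 F, A ∉ ZT1 F → ∀ B ∈ T1 F, ∀ C ∈ T1 F,
      B * A = A * B → C * A = A * C → B * C = C * B) ∧
    -- ω(T₁) = q² + 1
    omegaM (T1 F) = Fintype.card F ^ 2 + 1 :=
  ⟨T1.one_mem, fun _ hA _ hB => T1.mul_mem hA hB, fun _ hA => T1.exists_inv hA, T1.center_eq,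
    T1.ncard_ZT1, fun _ hA hAZ _ hB _ hC => T1.mul_comm_of_mem_centralizer hA hAZ hB hC,
    T1.omegaM_eq⟩
end

section
/- Let N_0 = {A ∈ UU_4(F_q) : a_{12}a_{23}a_{34} ≠ 0}. Then the maximum size of a pairwise non-commuting subset of N_0 is q(q−1)². -/
/-!
Write `A ∈ UU₄` with superdiagonal `a, b, c`, second diagonal `x, y` and corner `z`. Then `A` and
`A'` commute iff `a b' = a' b`, `b c' = b' c` and `a y' + x c' = a' y + x' c`. On `N₀` (where
`a b c ≠ 0`) this is implied by equality of the invariant `(b/a, c/a, (a y - x c)/a²)`, which takes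
values in `Fˣ × Fˣ × F`, so a pairwise non-commuting subset of `N₀` has at most `q (q-1)²`
elements. Conversely the matrices with `a = 1`, `x = z = 0` and arbitrary `b, c ≠ 0`, `y` are
pairwise non-commuting.
-/

section omegaM

variable {M β : Type*} [Monoid M] {X : Set M}

theorem card_le_of_pairwise_not_commute_s10 (f : M → β) (S : Finset β) (hfS : Set.MapsTo f X S)
    (hf : ∀ x ∈ X, ∀ y ∈ X, f x = f y → Commute x y) {N : Finset M} (hNX : ↑N ⊆ X)
    (hN : ∀ x ∈ N, ∀ y ∈ N, x ≠ y → ¬Commute x y) : N.card ≤ S.card :=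
  Finset.card_le_card_of_injOn f (fun _ hx => hfS (hNX hx)) fun x hx y hy hxy =>
    by_contra fun hne => hN x hx y hy hne (hf x (hNX hx) y (hNX hy) hxy)

theorem omegaM_eq_card_s10 (S : Finset β) (f : M → β) (hfS : Set.MapsTo f X S)
    (hf : ∀ x ∈ X, ∀ y ∈ X, f x = f y → Commute x y) (g : β → M) (hgX : Set.MapsTo g S X)
    (hg : ∀ p ∈ S, ∀ q ∈ S, Commute (g p) (g q) → p = q) :
    omegaM X = S.card := by
  classical
  have hle : ∀ k ∈ {k : ℕ | ∃ N : Finset M, ↑N ⊆ X ∧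
      (∀ x ∈ N, ∀ y ∈ N, x ≠ y → x * y ≠ y * x) ∧ N.card = k}, k ≤ S.card := by
    rintro k ⟨N, hNX, hN, rfl⟩
    exact card_le_of_pairwise_not_commute_s10 f S hfS hf hNX hN
  have hgS : Set.InjOn g S := fun p hp q hq hpq => hg p hp q hq (hpq ▸ Commute.refl _)
  refine le_antisymm (csSup_le ⟨0, ∅, by simp⟩ hle) (le_csSup ⟨_, hle⟩ ⟨S.image g, ?_, ?_, ?_⟩)
  · rw [Finset.coe_image]
    exact hgX.image_subset
  · simp only [Finset.mem_image]
    rintro _ ⟨p, hp, rfl⟩ _ ⟨q, hq, rfl⟩ hne hcomm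
    exact hne (congrArg g (hg p hp q hq hcomm))
  · exact Finset.card_image_of_injOn hgS

end omegaM

section UU4

variable {F : Type*} [Field F]

def uu4 (a b c x y z : F) : Matrix (Fin 4) (Fin 4) F :=
  !![1, a, x, z; 0, 1, b, y; 0, 0, 1, c; 0, 0, 0, 1]

theorem uu4_mul (a b c x y z a' b' c' x' y' z' : F) :
    uu4 a b c x y z * uu4 a' b' c' x' y' z' =
      uu4 (a + a') (b + b') (c + c') (x + x' + a * b') (y + y' + b * c')
        (z + z' + a * y' + x * c') := by
  ext i j
  fin_cases i <;> fin_cases j <;>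
    simp [uu4, Matrix.mul_apply, Fin.sum_univ_four] <;> ring

theorem uu4_inj {a b c x y z a' b' c' x' y' z' : F} :
    uu4 a b c x y z = uu4 a' b' c' x' y' z' ↔
      a = a' ∧ b = b' ∧ c = c' ∧ x = x' ∧ y = y' ∧ z = z' := by
  constructor
  · intro h
    have e : ∀ i j, uu4 a b c x y z i j = uu4 a' b' c' x' y' z' i j := fun i j => by rw [h]
    exact ⟨e 0 1, e 1 2, e 2 3, e 0 2, e 1 3, e 0 3⟩
  · rintro ⟨rfl, rfl, rfl, rfl, rfl, rfl⟩
    rfl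

theorem commute_uu4_iff {a b c x y z a' b' c' x' y' z' : F} :
    Commute (uu4 a b c x y z) (uu4 a' b' c' x' y' z') ↔
      a * b' = a' * b ∧ b * c' = b' * c ∧ a * y' + x * c' = a' * y + x' * c := by
  rw [Commute, SemiconjBy, uu4_mul, uu4_mul, uu4_inj]
  constructor
  · rintro ⟨-, -, -, hx, hy, hz⟩
    exact ⟨by linear_combination hx, by linear_combination hy, by linear_combination hz⟩
  · rintro ⟨hab, hbc, hay⟩
    exact ⟨add_comm _ _, add_comm _ _, add_comm _ _, by linear_combination hab,
      by linear_combination hbc, by linear_combination hay⟩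

theorem IsUU.eq_uu4 {A : Matrix (Fin 4) (Fin 4) F} (hA : IsUU A) :
    A = uu4 (A 0 1) (A 1 2) (A 2 3) (A 0 2) (A 1 3) (A 0 3) := by
  ext i j
  fin_cases i <;> fin_cases j <;>
    simp [uu4] <;> first | exact hA.1 _ | exact hA.2 _ _ (by decide)

theorem isUU_uu4 (a b c x y z : F) : IsUU (uu4 a b c x y z) := by
  refine ⟨fun i => ?_, fun i j hij => ?_⟩
  · fin_cases i <;> rfl
  · fin_cases i <;> fin_cases j <;> first | rfl | exact absurd hij (by decide)

theorem commute_uu4_of_invariant_eq {a b c x y z a' b' c' x' y' z' : F}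
    (ha : a ≠ 0) (ha' : a' ≠ 0) (hb : b / a = b' / a') (hc : c / a = c' / a')
    (hy : (a * y - x * c) / a ^ 2 = (a' * y' - x' * c') / a' ^ 2) :
    Commute (uu4 a b c x y z) (uu4 a' b' c' x' y' z') := by
  field_simp at hb hc hy
  refine commute_uu4_iff.2 ⟨by linear_combination -hb, ?_, ?_⟩
  · exact mul_left_cancel₀ ha (by linear_combination c * hb - b * hc)
  · exact mul_left_cancel₀ (mul_ne_zero ha ha')
      (by linear_combination -hy - (a * x' + a' * x) * hc)

noncomputable def uu4Invariant (A : Matrix (Fin 4) (Fin 4) F) : F × F × F :=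
  (A 1 2 / A 0 1, A 2 3 / A 0 1, (A 0 1 * A 1 3 - A 0 2 * A 2 3) / A 0 1 ^ 2)

theorem commute_of_uu4Invariant_eq {A B : Matrix (Fin 4) (Fin 4) F}
    (hA : IsUU A) (hA0 : A 0 1 * A 1 2 * A 2 3 ≠ 0) (hB : IsUU B)
    (hB0 : B 0 1 * B 1 2 * B 2 3 ≠ 0) (h : uu4Invariant A = uu4Invariant B) : Commute A B := by
  simp only [uu4Invariant, Prod.mk.injEq] at h
  rw [hA.eq_uu4, hB.eq_uu4]
  exact commute_uu4_of_invariant_eq (left_ne_zero_of_mul (left_ne_zero_of_mul hA0))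
    (left_ne_zero_of_mul (left_ne_zero_of_mul hB0)) h.1 h.2.1 h.2.2

theorem uu4_one_zero_eq_of_commute {b c y b' c' y' : F} (hb : b ≠ 0)
    (h : Commute (uu4 1 b c 0 y 0) (uu4 1 b' c' 0 y' 0)) : (b, c, y) = (b', c', y') := by
  obtain ⟨hbb, hcc, hyy⟩ := commute_uu4_iff.1 h
  have hb' : b = b' := by linear_combination -hbb
  subst hb'
  exact Prod.ext rfl (Prod.ext (mul_left_cancel₀ hb (by linear_combination -hcc))
    (by linear_combination -hyy))

end UU4

theorem stmt10 {F : Type*} [Field F] [Fintype F] :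
    omegaM {A : Matrix (Fin 4) (Fin 4) F | IsUU A ∧ A 0 1 * A 1 2 * A 2 3 ≠ 0} =
      Fintype.card F * (Fintype.card F - 1) ^ 2 := by
  classical
  let S : Finset (F × F × F) := (Finset.univ.erase 0) ×ˢ (Finset.univ.erase 0) ×ˢ Finset.univ
  have hS : S.card = Fintype.card F * (Fintype.card F - 1) ^ 2 := by
    simp only [S, Finset.card_product, Finset.card_erase_of_mem (Finset.mem_univ _),
      Finset.card_univ]
    ring
  rw [← hS]
  refine omegaM_eq_card_s10 S uu4Invariant ?_ (fun A hA B hB => commute_of_uu4Invariant_eq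
    hA.1 hA.2 hB.1 hB.2) (fun p => uu4 1 p.1 p.2.1 0 p.2.2 0) ?_ ?_
  · rintro A ⟨-, hA0⟩
    obtain ⟨⟨ha, hb⟩, hc⟩ := mul_ne_zero_iff.1 hA0 |>.imp_left mul_ne_zero_iff.1
    simp [S, uu4Invariant, ha, hb, hc]
  · rintro ⟨b, c, y⟩ hp
    simp only [S, Finset.coe_product, Set.mem_prod, Finset.mem_coe, Finset.mem_erase] at hp
    exact ⟨isUU_uu4 _ _ _ _ _ _, by simp [uu4, hp.1.1, hp.2.1.1]⟩
  · rintro ⟨b, c, y⟩ hp ⟨b', c', y'⟩ - h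
    exact uu4_one_zero_eq_of_commute (Finset.mem_erase.1 (Finset.mem_product.1 hp).1).1 h
end

section
/- Fix y ∈ F_q* with y ≠ 1 and suppose q > 2. In M = F_q × F_q* × F_q with commuting relation x₁y₂ − y₁x₂ = z₁ − z₂, the set {(z, y, z) : z ∈ F_q} ∪ {(m+1, 1, 1) : m ∈ F_q, m ≠ y⁻¹ − 1} ∪ {(y⁻¹ − 1, 1, 0)} is a pairwise non-commuting set of 2q elements. Hence ω(M) ≥ 2q. -/
/-- The commuting relation on `F³`: `(x₁,y₁,z₁) C (x₂,y₂,z₂)` iff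
`x₁y₂ − y₁x₂ = z₁ − z₂`. -/
def rel {F : Type*} [Field F] (p q : F × F × F) : Prop :=
  p.1 * q.2.1 - p.2.1 * q.1 = p.2.2 - q.2.2

/-- The non-commuting structure `M = F × F* × F`. -/
def structM (F : Type*) [Field F] : Set (F × F × F) := {p | p.2.1 ≠ 0}

/-- The centralizer of `(m,1,0)` in `M`: points `(x,y,z) ∈ M` with `x − my = z`. -/
def Cm {F : Type*} [Field F] (m : F) : Set (F × F × F) :=
  {p | p.2.1 ≠ 0 ∧ p.1 - m * p.2.1 = p.2.2}

/-- Maximum size of a pairwise non-commuting subset of `S` for the relation `rel`. -/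
noncomputable def omegaR {F : Type*} [Field F] (S : Set (F × F × F)) : ℕ :=
  sSup {k : ℕ | ∃ N : Finset (F × F × F), ↑N ⊆ S ∧
    (∀ p ∈ N, ∀ q ∈ N, p ≠ q → ¬ rel p q) ∧ N.card = k}

/-
The set consists of the line `{(z, y, z)}`, the `q - 1` points `(m + 1, 1, 1)` with
`m ≠ y⁻¹ - 1`, and one extra point `(y⁻¹ - 1, 1, 0)` in place of the missing one. Since `rel` is
symmetric, only the six types of pairs need checking, and each reduces to a linear equation
whose only solution is the excluded value `y = 1` or `m = y⁻¹ - 1`.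
-/

section NonCommuting

variable {F : Type*} [Field F] {y z w m n : F}

theorem rel_symm {p q : F × F × F} (h : rel p q) : rel q p := by
  unfold rel at *
  linear_combination -h

instance : Std.Symm fun p q : F × F × F => ¬ rel p q :=
  ⟨fun _ _ h h' => h (rel_symm h')⟩

theorem rel_diag_diag_iff (hy1 : y ≠ 1) : rel (z, y, z) (w, y, w) ↔ z = w := by
  unfold rel
  constructor
  · intro h
    have : (z - w) * (y - 1) = 0 := by linear_combination h
    simpa [sub_eq_zero, hy1] using this
  · rintro rfl
    ring

theorem rel_diag_shift_iff (hy0 : y ≠ 0) : rel (z, y, z) (m + 1, 1, 1) ↔ m = y⁻¹ - 1 := by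
  unfold rel
  have hinv : y * y⁻¹ = 1 := mul_inv_cancel₀ hy0
  constructor <;> intro h
  · linear_combination (-y⁻¹) * h - (m + 1) * hinv
  · linear_combination (-y) * h - hinv

theorem rel_shift_shift_iff : rel (m + 1, (1 : F), (1 : F)) (n + 1, 1, 1) ↔ m = n := by
  unfold rel
  constructor <;> intro h <;> linear_combination h

theorem rel_diag_pivot_iff (hy0 : y ≠ 0) : rel (z, y, z) (y⁻¹ - 1, 1, 0) ↔ y = 1 := by
  unfold rel
  have hinv : y * y⁻¹ = 1 := mul_inv_cancel₀ hy0
  constructor <;> intro h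
  · linear_combination h + hinv
  · linear_combination h - hinv

theorem rel_shift_pivot_iff : rel (m + 1, (1 : F), (1 : F)) (y⁻¹ - 1, 1, 0) ↔ m = y⁻¹ - 1 := by
  unfold rel
  constructor <;> intro h <;> linear_combination h

theorem ncard_le_omegaR [Finite F] {S T : Set (F × F × F)} (hTS : T ⊆ S)
    (hT : T.Pairwise fun p q => ¬ rel p q) : T.ncard ≤ omegaR S := by
  apply le_csSup
  · refine ⟨Nat.card (F × F × F), ?_⟩
    rintro k ⟨N, -, -, rfl⟩
    simpa using Set.ncard_le_card (N : Set (F × F × F))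
  · refine ⟨T.toFinite.toFinset, by rwa [Set.Finite.coe_toFinset], fun p hp q hq => ?_,
      (Set.ncard_eq_toFinset_card T).symm⟩
    exact hT ((Set.Finite.mem_toFinset _).1 hp) ((Set.Finite.mem_toFinset _).1 hq)

variable (y) in
def nonCommutingSet : Set (F × F × F) :=
  {p | ∃ z : F, p = (z, y, z)} ∪
  {p | ∃ m : F, m ≠ y⁻¹ - 1 ∧ p = (m + 1, 1, 1)} ∪
  {(y⁻¹ - 1, 1, 0)}

theorem nonCommutingSet_subset_structM (hy0 : y ≠ 0) : nonCommutingSet y ⊆ structM F := by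
  rintro p ((⟨z, rfl⟩ | ⟨m, -, rfl⟩) | rfl)
  exacts [hy0, one_ne_zero, one_ne_zero]

theorem pairwise_not_rel_nonCommutingSet (hy0 : y ≠ 0) (hy1 : y ≠ 1) :
    (nonCommutingSet y).Pairwise fun p q => ¬ rel p q := by
  simp only [nonCommutingSet, Set.pairwise_union_of_symm]
  refine ⟨⟨?diag, ?shift, ?diag_shift⟩, Set.pairwise_singleton _ _, ?pivot⟩
  case diag =>
    rintro _ ⟨z, rfl⟩ _ ⟨w, rfl⟩ hne h
    exact hne (by rw [(rel_diag_diag_iff hy1).1 h])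
  case shift =>
    rintro _ ⟨m, -, rfl⟩ _ ⟨n, -, rfl⟩ hne h
    exact hne (by rw [rel_shift_shift_iff.1 h])
  case diag_shift =>
    rintro _ ⟨z, rfl⟩ _ ⟨m, hm, rfl⟩ - h
    exact hm ((rel_diag_shift_iff hy0).1 h)
  case pivot =>
    rintro _ (⟨z, rfl⟩ | ⟨m, hm, rfl⟩) _ rfl - h
    exacts [hy1 ((rel_diag_pivot_iff hy0).1 h), hm (rel_shift_pivot_iff.1 h)]

theorem ncard_nonCommutingSet [Finite F] (hy1 : y ≠ 1) :
    (nonCommutingSet y).ncard = 2 * Nat.card F := by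
  have hdiag : {p : F × F × F | ∃ z : F, p = (z, y, z)} = Set.range fun z => (z, y, z) := by
    ext; simp [eq_comm]
  have hshift : {p : F × F × F | ∃ m : F, m ≠ y⁻¹ - 1 ∧ p = (m + 1, 1, 1)} =
      (fun m => (m + 1, 1, 1)) '' {y⁻¹ - 1}ᶜ := by
    ext; simp [eq_comm]
  have hdisj : Disjoint {p : F × F × F | ∃ z : F, p = (z, y, z)}
      {p | ∃ m : F, m ≠ y⁻¹ - 1 ∧ p = (m + 1, 1, 1)} := by
    rw [Set.disjoint_left]
    rintro _ ⟨z, rfl⟩ ⟨m, -, h⟩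
    exact hy1 (congrArg (·.2.1) h)
  have hdisj_pivot : Disjoint ({p : F × F × F | ∃ z : F, p = (z, y, z)} ∪
      {p | ∃ m : F, m ≠ y⁻¹ - 1 ∧ p = (m + 1, 1, 1)}) {(y⁻¹ - 1, 1, 0)} := by
    rw [Set.disjoint_singleton_right]
    rintro (⟨z, h⟩ | ⟨m, -, h⟩)
    · exact hy1 (congrArg (·.2.1) h).symm
    · exact zero_ne_one (congrArg (·.2.2) h)
  rw [nonCommutingSet, Set.ncard_union_eq hdisj_pivot, Set.ncard_union_eq hdisj, hdiag, hshift,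
    Set.ncard_range_of_injective fun _ _ h => congrArg Prod.fst h,
    Set.ncard_image_of_injective _ fun _ _ h => add_right_cancel (congrArg Prod.fst h),
    Set.ncard_singleton, ← Set.ncard_compl_add_ncard {y⁻¹ - 1}, Set.ncard_singleton]
  ring

end NonCommuting

theorem stmt13_general {F : Type*} [Field F] [Fintype F]
    (y : F) (hy0 : y ≠ 0) (hy1 : y ≠ 1) :
    let S : Set (F × F × F) :=
      {p | ∃ z : F, p = (z, y, z)} ∪
      {p | ∃ m : F, m ≠ y⁻¹ - 1 ∧ p = (m + 1, 1, 1)} ∪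
      {(y⁻¹ - 1, 1, 0)}
    S ⊆ structM F ∧
    (∀ p ∈ S, ∀ q ∈ S, p ≠ q → ¬ rel p q) ∧
    S.ncard = 2 * Fintype.card F ∧
    2 * Fintype.card F ≤ omegaR (structM F) := by
  have hcard : (nonCommutingSet y).ncard = 2 * Fintype.card F := by
    rw [ncard_nonCommutingSet hy1, Nat.card_eq_fintype_card]
  have hS := pairwise_not_rel_nonCommutingSet hy0 hy1
  have hM := nonCommutingSet_subset_structM hy0
  exact ⟨hM, hS, hcard, hcard ▸ ncard_le_omegaR hM hS⟩

theorem stmt13 {F : Type*} [Field F] [Fintype F] (hq : 2 < Fintype.card F)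
    (y : F) (hy0 : y ≠ 0) (hy1 : y ≠ 1) :
    let S : Set (F × F × F) :=
      {p | ∃ z : F, p = (z, y, z)} ∪
      {p | ∃ m : F, m ≠ y⁻¹ - 1 ∧ p = (m + 1, 1, 1)} ∪
      {(y⁻¹ - 1, 1, 0)}
    S ⊆ structM F ∧
    (∀ p ∈ S, ∀ q ∈ S, p ≠ q → ¬ rel p q) ∧
    S.ncard = 2 * Fintype.card F ∧
    2 * Fintype.card F ≤ omegaR (structM F) :=
  stmt13_general y hy0 hy1
end

section
/- In M = F_q × F_q* × F_q with commuting relation x₁y₂ − y₁x₂ = z₁ − z₂: for fixed a ∈ F_q*, m ∈ F_q*, c ∈ F_q, the set {(mx + c, a, amx) : x ∈ F_q} is an abelian set of size q which is non-extendable, i.e., every element of M commuting with all elements of this set already lies in the set. -/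
/-! A point `p = (u, v, w)` commutes with `(m x + c, a, a m x)` iff `(a - v) m x + (a u - v c - w) = 0`.
This is affine in `x`, so commuting with the points at `x = 0` and `x = 1` already forces `v = a` and
`w = a (u - c)`, which is the point of the line with parameter `(u - c) / m`. -/

section

variable {F : Type*} [Field F]

def lineM (a m c x : F) : F × F × F := (m * x + c, a, a * m * x)

theorem rel_lineM (a m c x y : F) : rel (lineM a m c x) (lineM a m c y) := by
  simp only [rel, lineM]
  ring

theorem lineM_injective (a c : F) {m : F} (hm : m ≠ 0) : Function.Injective (lineM a m c) := by
  intro x y h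
  have hfst : m * x + c = m * y + c := congrArg Prod.fst h
  exact mul_left_cancel₀ hm (add_right_cancel hfst)

theorem lineM_div (a c u : F) {m : F} (hm : m ≠ 0) :
    lineM a m c ((u - c) / m) = (u, a, a * (u - c)) := by
  have hx : m * ((u - c) / m) = u - c := mul_div_cancel₀ _ hm
  simp only [lineM, mul_assoc, hx, sub_add_cancel]

theorem eq_of_rel_lineM_zero_one {a m c : F} (hm : m ≠ 0) {p : F × F × F}
    (h₀ : rel p (lineM a m c 0)) (h₁ : rel p (lineM a m c 1)) :
    p = (p.1, a, a * (p.1 - c)) := by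
  obtain ⟨u, v, w⟩ := p
  simp only [rel, lineM] at h₀ h₁
  have hv : v = a := mul_right_cancel₀ hm (by linear_combination h₀ - h₁)
  subst hv
  have hw : w = v * (u - c) := by linear_combination -h₀
  rw [hw]

theorem mem_range_lineM_of_rel {a m c : F} (hm : m ≠ 0) {p : F × F × F}
    (h₀ : rel p (lineM a m c 0)) (h₁ : rel p (lineM a m c 1)) :
    p ∈ Set.range (lineM a m c) :=
  ⟨(p.1 - c) / m, by rw [lineM_div a c p.1 hm, ← eq_of_rel_lineM_zero_one hm h₀ h₁]⟩

end

theorem stmt14 {F : Type*} [Field F] [Fintype F]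
    (a m : F) (ha : a ≠ 0) (hm : m ≠ 0) (c : F) :
    let S : Set (F × F × F) := {p | ∃ x : F, p = (m * x + c, a, a * m * x)}
    S ⊆ structM F ∧
    (∀ p ∈ S, ∀ q ∈ S, p ≠ q → rel p q) ∧
    S.ncard = Fintype.card F ∧
    (∀ p ∈ structM F, (∀ q ∈ S, rel p q) → p ∈ S) := by
  intro S
  have hS : S = Set.range (lineM a m c) := by
    ext p
    simp only [S, Set.mem_ofPred_eq, Set.mem_range, lineM, eq_comm]
  rw [hS]
  refine ⟨?_, ?_, ?_, ?_⟩
  · rintro _ ⟨x, rfl⟩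
    exact ha
  · rintro _ ⟨x, rfl⟩ _ ⟨y, rfl⟩ -
    exact rel_lineM a m c x y
  · rw [← Nat.card_coe_set_eq, Nat.card_range_of_injective (lineM_injective a c hm),
      Nat.card_eq_fintype_card]
  · intro p _ hp
    exact mem_range_lineM_of_rel hm (hp _ ⟨0, rfl⟩) (hp _ ⟨1, rfl⟩)
end

section
/- In M = F_q × F_q* × F_q with commuting relation x₁y₂ − y₁x₂ = z₁ − z₂, every abelian subset of M has cardinality at most q. -/
/-!
For a fixed `p`, the relation `rel p r` says that `r.2.2` is an affine function of
`(r.1, r.2.1)`. So in an abelian set `S` the last coordinate is determined by the first two,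
and if `p ≠ q` both lie in `S`, subtracting the two affine equations places all of `S` on one
nondegenerate line of the `(x, y)`-plane. One of the coordinates `x`, `y` is then injective on
`S`, which bounds `|S|` by `|F|`.
-/

lemma Set.InjOn.ncard_le_card {α β : Type*} [Fintype β] {f : α → β} {T : Set α}
    (hf : T.InjOn f) : T.ncard ≤ Fintype.card β := by
  rw [← hf.ncard_image, ← Nat.card_eq_fintype_card]
  exact Set.ncard_le_card _

namespace AbelianSet

variable {F : Type*} [Field F] {S : Set (F × F × F)} {p q r s : F × F × F}

lemma rel_refl (p : F × F × F) : rel p p := by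
  unfold rel
  ring

lemma rel_of_pairwise (hS : S.Pairwise rel) (hp : p ∈ S) (hr : r ∈ S) : rel p r := by
  by_cases hpr : p = r
  · exact hpr ▸ rel_refl p
  · exact hS hp hr hpr

lemma eq_of_rel_of_rel (hr : rel p r) (hs : rel p s) (hx : r.1 = s.1) (hy : r.2.1 = s.2.1) :
    r = s := by
  have hz : r.2.2 = s.2.2 := by
    unfold rel at hr hs
    rw [hx, hy] at hr
    linear_combination hr - hs
  exact Prod.ext hx (Prod.ext hy hz)

lemma line_of_rel_of_rel (hp : rel p r) (hq : rel q r) :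
    (p.2.1 - q.2.1) * r.1 - (p.1 - q.1) * r.2.1 + (p.2.2 - q.2.2) = 0 := by
  unfold rel at hp hq
  linear_combination hq - hp

lemma injOn_fst_or_injOn_snd_fst (hS : S.Pairwise rel) (hp : p ∈ S) (hq : q ∈ S)
    (hpq : p ≠ q) : S.InjOn Prod.fst ∨ S.InjOn (fun r => r.2.1) := by
  have hline : ∀ r ∈ S,
      (p.2.1 - q.2.1) * r.1 - (p.1 - q.1) * r.2.1 + (p.2.2 - q.2.2) = 0 := fun r hr =>
    line_of_rel_of_rel (rel_of_pairwise hS hp hr) (rel_of_pairwise hS hq hr)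
  have hdet : ∀ r ∈ S, ∀ s ∈ S, r.1 = s.1 → r.2.1 = s.2.1 → r = s := fun r hr s hs =>
    eq_of_rel_of_rel (rel_of_pairwise hS hp hr) (rel_of_pairwise hS hp hs)
  by_cases ha : p.2.1 - q.2.1 = 0
  · have hb : p.1 - q.1 ≠ 0 := fun hb =>
      hpq (hdet p hp q hq (sub_eq_zero.1 hb) (sub_eq_zero.1 ha))
    left
    intro r hr s hs hx
    refine hdet r hr s hs hx (mul_left_cancel₀ hb ?_)
    linear_combination (hline s hs - hline r hr) + (p.2.1 - q.2.1) * hx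
  · right
    intro r hr s hs hy
    refine hdet r hr s hs (mul_left_cancel₀ ha ?_) hy
    linear_combination (hline r hr - hline s hs) + (p.1 - q.1) * hy

end AbelianSet

open AbelianSet in
theorem stmt15_general {F : Type*} [Field F] [Fintype F]
    (S : Set (F × F × F))
    (habel : ∀ p ∈ S, ∀ q ∈ S, p ≠ q → rel p q) :
    S.ncard ≤ Fintype.card F := by
  obtain hsub | ⟨p, hp, q, hq, hpq⟩ := S.subsingleton_or_nontrivial
  · exact (Set.ncard_le_one_iff_subsingleton.2 hsub).trans Fintype.card_pos
  obtain hinj | hinj := injOn_fst_or_injOn_snd_fst habel hp hq hpq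
  exacts [hinj.ncard_le_card, hinj.ncard_le_card]

theorem stmt15 {F : Type*} [Field F] [Fintype F]
    (S : Set (F × F × F)) (hS : S ⊆ structM F)
    (habel : ∀ p ∈ S, ∀ q ∈ S, p ≠ q → rel p q) :
    S.ncard ≤ Fintype.card F :=
  stmt15_general S habel
end

section
/- M = F_q × F_q* × F_q with commuting relation x₁y₂ − y₁x₂ = z₁ − z₂ admits a partition into exactly q(q−1) pairwise disjoint abelian sets, each of size q, namely the sets {(x + c, a, ax) : x ∈ F_q} indexed by a ∈ F_q*, c ∈ F_q. Consequently ω(M) ≤ q(q−1). -/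
/-! Each point of `M` lies on exactly one line `{(x + c, a, a x)}`, and each such line is abelian;
so a pairwise non-commuting set meets every line at most once, and there are `q (q - 1)` lines. -/

theorem omegaR_le_card_of_cover {F ι : Type*} [Field F] [Fintype ι] {S : Set (F × F × F)}
    (A : ι → Set (F × F × F)) (hcover : S ⊆ ⋃ i, A i) (habel : ∀ i, (A i).Pairwise rel) :
    omegaR S ≤ Fintype.card ι := by
  apply csSup_le'
  rintro _ ⟨N, hNS, hN, rfl⟩
  have hidx : ∀ p : N, ∃ i, (p : F × F × F) ∈ A i := fun p =>
    Set.mem_iUnion.mp (hcover (hNS p.2))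
  choose idx hidx using hidx
  rw [← Fintype.card_coe]
  refine Fintype.card_le_of_injective idx fun p q hpq => ?_
  by_contra hne
  exact hN p p.2 q q.2 (Subtype.coe_ne_coe.mpr hne)
    (habel _ (hidx p) (hpq ▸ hidx q) (Subtype.coe_ne_coe.mpr hne))

section Lines

variable {F : Type*} [Field F]

def abelianLine (a c : F) : Set (F × F × F) := {p | ∃ x : F, p = (x + c, a, a * x)}

theorem abelianLine_pairwise_rel (a c : F) : (abelianLine a c).Pairwise rel := by
  rintro _ ⟨x, rfl⟩ _ ⟨y, rfl⟩ -
  simp only [rel]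
  ring

theorem mem_abelianLine_iff {a : F} (ha : a ≠ 0) (c : F) (p : F × F × F) :
    p ∈ abelianLine a c ↔ p.2.1 = a ∧ p.1 - p.2.2 / p.2.1 = c := by
  obtain ⟨x, y, z⟩ := p
  constructor
  · rintro ⟨t, h⟩
    simp only [Prod.mk.injEq] at h
    obtain ⟨rfl, rfl, rfl⟩ := h
    exact ⟨rfl, by field_simp; ring⟩
  · rintro ⟨rfl, rfl⟩
    exact ⟨z / y, Prod.ext (by ring) (Prod.ext rfl (by field_simp))⟩

theorem abelianLine_ncard (a c : F) : (abelianLine a c).ncard = Nat.card F := by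
  have hrange : abelianLine a c = Set.range fun x : F => (x + c, a, a * x) := by
    ext p
    exact exists_congr fun x => eq_comm
  have hinj : Function.Injective fun x : F => (x + c, a, a * x) := fun x y h =>
    add_right_cancel (congrArg Prod.fst h)
  rw [hrange, ← Nat.card_coe_set_eq, Nat.card_range_of_injective hinj]

theorem iUnion_abelianLine :
    ⋃ ac : {a : F // a ≠ 0} × F, abelianLine ac.1.1 ac.2 = structM F := by
  ext p
  constructor
  · rintro ⟨_, ⟨⟨⟨a, ha⟩, c⟩, rfl⟩, hp⟩
    exact (show p.2.1 ≠ 0 from ((mem_abelianLine_iff ha c p).1 hp).1 ▸ ha)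
  · intro hp
    exact Set.mem_iUnion.2 ⟨(⟨p.2.1, hp⟩, p.1 - p.2.2 / p.2.1),
      (mem_abelianLine_iff hp _ p).2 ⟨rfl, rfl⟩⟩

theorem abelianLine_inter_eq_empty {a₁ a₂ : F} (ha₁ : a₁ ≠ 0) (ha₂ : a₂ ≠ 0) {c₁ c₂ : F}
    (hne : (a₁, c₁) ≠ (a₂, c₂)) : abelianLine a₁ c₁ ∩ abelianLine a₂ c₂ = ∅ := by
  refine Set.eq_empty_of_forall_notMem fun p ⟨h₁, h₂⟩ => hne ?_
  obtain ⟨rfl, rfl⟩ := (mem_abelianLine_iff ha₁ c₁ p).1 h₁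
  obtain ⟨rfl, rfl⟩ := (mem_abelianLine_iff ha₂ c₂ p).1 h₂
  rfl

end Lines

theorem stmt16 {F : Type*} [Field F] [Fintype F] [DecidableEq F] :
    let A : {a : F // a ≠ 0} × F → Set (F × F × F) :=
      fun ac => {p | ∃ x : F, p = (x + ac.2, ac.1.1, ac.1.1 * x)}
    (⋃ ac, A ac) = structM F ∧
    (∀ ac₁ ac₂, ac₁ ≠ ac₂ → A ac₁ ∩ A ac₂ = ∅) ∧
    (∀ ac, (A ac).ncard = Fintype.card F) ∧
    (∀ ac, ∀ p ∈ A ac, ∀ q ∈ A ac, p ≠ q → rel p q) ∧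
    Fintype.card ({a : F // a ≠ 0} × F) = Fintype.card F * (Fintype.card F - 1) ∧
    omegaR (structM F) ≤ Fintype.card F * (Fintype.card F - 1) := by
  intro A
  have hcard : Fintype.card ({a : F // a ≠ 0} × F) = Fintype.card F * (Fintype.card F - 1) := by
    simp [Fintype.card_prod, Fintype.card_subtype_compl, mul_comm]
  refine ⟨iUnion_abelianLine, ?_, fun ac => (abelianLine_ncard _ _).trans Nat.card_eq_fintype_card,
    fun ac => abelianLine_pairwise_rel _ _, hcard,
    hcard ▸ omegaR_le_card_of_cover A iUnion_abelianLine.ge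
      fun ac => abelianLine_pairwise_rel _ _⟩
  rintro ⟨⟨a₁, ha₁⟩, c₁⟩ ⟨⟨a₂, ha₂⟩, c₂⟩ hne
  exact abelianLine_inter_eq_empty ha₁ ha₂ fun h => hne (by simpa using h)
end

section
/- Let q ≠ 2 be a prime power. For the structure N = F_q × F_q* with commuting relation (x₁,y₁) C (x₂,y₂) iff x₁y₂ − y₁x₂ = x₁ − x₂, the maximum size of a pairwise non-commuting subset of N is exactly q + 1. -/
/-- The commuting relation on `N = F × F*`: `(x₁,y₁) C (x₂,y₂)` iff
`x₁y₂ − y₁x₂ = x₁ − x₂`. -/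
def relN {F : Type*} [Field F] (p q : F × F) : Prop :=
  p.1 * q.2 - p.2 * q.1 = p.1 - q.1

noncomputable def omegaN {F : Type*} [Field F] (S : Set (F × F)) : ℕ :=
  sSup {k : ℕ | ∃ N : Finset (F × F), ↑N ⊆ S ∧
    (∀ p ∈ N, ∀ q ∈ N, p ≠ q → ¬ relN p q) ∧ N.card = k}

/-!
Rewrite `relN p q` as `p.1 (q.2 - 1) = q.1 (p.2 - 1)`: two elements commute exactly when the
vectors `(x, y - 1)` they define are linearly dependent. Sending `(x, y)` to the point of the
projective line `Option F` spanned by `(x, y - 1)` (with `(0, 1)` sent anywhere, since it commutes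
with everything) is therefore injective on a non-commuting set, which gives the bound `q + 1`.
Conversely, for `t ∉ {0, -1}` the `q + 1` elements `(1, 1)` and `(t c, t + 1)`, `c ∈ F`, lie in
`N` and represent all `q + 1` points of the projective line; such a `t` exists as soon as `q ≠ 2`.
-/

open Finset

section

variable {F : Type*} [Field F]

theorem relN_iff (p q : F × F) : relN p q ↔ p.1 * (q.2 - 1) = q.1 * (p.2 - 1) := by
  unfold relN
  constructor <;> intro h <;> linear_combination h

def projCoord [DecidableEq F] (p : F × F) : Option F :=
  if p.2 = 1 then none else some (p.1 / (p.2 - 1))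

theorem relN_of_projCoord_eq [DecidableEq F] {p q : F × F} (h : projCoord p = projCoord q) :
    relN p q := by
  rw [relN_iff]
  unfold projCoord at h
  by_cases hp : p.2 = 1 <;> by_cases hq : q.2 = 1 <;> simp [hp, hq] at h
  · rw [hp, hq]; ring
  · field_simp [sub_ne_zero.2 hp, sub_ne_zero.2 hq] at h
    linear_combination h

theorem card_le_of_pairwise_not_relN [Fintype F] (M : Finset (F × F))
    (hM : ∀ p ∈ M, ∀ q ∈ M, p ≠ q → ¬ relN p q) : M.card ≤ Fintype.card F + 1 := by
  classical
  rw [← Fintype.card_option]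
  refine Finset.card_le_card_of_injOn projCoord (fun _ _ => Finset.mem_coe.2 (mem_univ _)) ?_
  intro p hp q hq hpq
  by_contra hne
  exact hM p hp q hq hne (relN_of_projCoord_eq hpq)

section Pencil

variable [Fintype F] [DecidableEq F] {t : F}

def pencil (t : F) : Finset (F × F) :=
  insert (1, 1) (univ.image fun c => (t * c, t + 1))

theorem pencil_subset (ht : t ≠ -1) : (↑(pencil t) : Set (F × F)) ⊆ {p | p.2 ≠ 0} := by
  intro p hp
  simp only [pencil, coe_insert, coe_image, coe_univ, Set.image_univ, Set.mem_insert_iff,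
    Set.mem_range] at hp
  rcases hp with rfl | ⟨c, rfl⟩
  · exact one_ne_zero
  · exact fun h => ht (eq_neg_of_add_eq_zero_left h)

theorem pencil_pairwise_not_relN (ht : t ≠ 0) :
    ∀ p ∈ pencil t, ∀ q ∈ pencil t, p ≠ q → ¬ relN p q := by
  intro p hp q hq hne hrel
  rw [relN_iff] at hrel
  simp only [pencil, mem_insert, mem_image, mem_univ, true_and] at hp hq
  rcases hp with rfl | ⟨c, rfl⟩ <;> rcases hq with rfl | ⟨d, rfl⟩
  · exact hne rfl
  · exact ht (by linear_combination hrel)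
  · exact ht (by linear_combination -hrel)
  · have hcd : (c - d) * t ^ 2 = 0 := by linear_combination hrel
    rcases mul_eq_zero.1 hcd with h | h
    · exact hne (by rw [sub_eq_zero.1 h])
    · exact ht (pow_eq_zero_iff two_ne_zero |>.1 h)

theorem card_pencil (ht : t ≠ 0) : (pencil t).card = Fintype.card F + 1 := by
  have hinj : Function.Injective fun c : F => (t * c, t + 1) :=
    fun a b hab => mul_left_cancel₀ ht (Prod.mk.inj hab).1
  rw [pencil, card_insert_of_notMem, card_image_of_injective _ hinj, card_univ]
  simp only [mem_image, mem_univ, true_and, Prod.mk.injEq, not_exists, not_and]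
  intro c _ h
  exact ht (by linear_combination h)

end Pencil

theorem exists_ne_zero_ne_neg_one [Fintype F] (hq : Fintype.card F ≠ 2) :
    ∃ t : F, t ≠ 0 ∧ t ≠ -1 := by
  classical
  have hcard : ({0, -1} : Finset F).card < (univ : Finset F).card := by
    have : 2 ≤ Fintype.card F := Fintype.one_lt_card
    calc ({0, -1} : Finset F).card ≤ 2 := card_le_two
      _ < _ := by rw [card_univ]; omega
  obtain ⟨t, -, ht⟩ := exists_mem_notMem_of_card_lt_card hcard
  simp only [mem_insert, mem_singleton, not_or] at ht
  exact ⟨t, ht⟩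

theorem omegaN_eq {S : Set (F × F)} {n : ℕ}
    (hex : ∃ N : Finset (F × F), ↑N ⊆ S ∧
      (∀ p ∈ N, ∀ q ∈ N, p ≠ q → ¬ relN p q) ∧ N.card = n)
    (hle : ∀ N : Finset (F × F), (∀ p ∈ N, ∀ q ∈ N, p ≠ q → ¬ relN p q) → N.card ≤ n) :
    omegaN S = n :=
  IsGreatest.csSup_eq ⟨hex, by rintro k ⟨N, -, hN, rfl⟩; exact hle N hN⟩

end

theorem stmt19 {F : Type*} [Field F] [Fintype F] (hq : Fintype.card F ≠ 2) :
    omegaN {p : F × F | p.2 ≠ 0} = Fintype.card F + 1 := by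
  classical
  obtain ⟨t, ht0, ht1⟩ := exists_ne_zero_ne_neg_one hq
  exact omegaN_eq ⟨pencil t, pencil_subset ht1, pencil_pairwise_not_relN ht0, card_pencil ht0⟩
    card_le_of_pairwise_not_relN
end
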